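/- arXiv:2101.10134 — 5 statements merged into one kernel-verified Lean document; each statement's English description precedes it below -/
import Mathlib

section
/- Let f : ℤ → ℝ/ℤ be a polynomial of degree d written as f(n) = ∑_{i=0}^d α_i · C(n,i) with binomial coefficients C(n,i), and define the smoothness norm ‖f‖_{C^∞[N]} = max_{1 ≤ i ≤ d} N^i ‖α_i‖_{ℝ/ℤ}. If instead f(n) = ∑_{i=0}^d β_i n^i, then there exists a positive integer D = O_d(1) such that ‖D β_i‖_{ℝ/ℤ} ≪_d N^{-i} ‖f‖_{C^∞[N]} for all i = 1, …, d. -/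
open Finset

/-- distance of a real number to the nearest integer, i.e. `‖x‖_{ℝ/ℤ}` -/
noncomputable def dZ (x : ℝ) : ℝ := |x - round x|

/-!
Put `P = ∑ α_j (X choose j)` and `Q = ∑ β_j X^j`. Then `P - Q` has degree at most `d` and is
integer-valued on `0, …, d`, so in its Newton expansion `P - Q = ∑_k Δ^k (P - Q)(0) (X choose k)`
all coefficients are integers, and `d! (P - Q)` has integer coefficients. Hence
`d! β_i ≡ d! [X^i] P = ∑_{j ≥ i} c_{ij} α_j (mod 1)` with the integers `c_{ij} = (d!/j!) s(j, i)`
(`s` the signed Stirling numbers of the first kind), and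
`N^i ‖d! β_i‖ ≤ ∑_j |c_{ij}| N^j ‖α_j‖ ≤ (∑_j |c_{ij}|) S`. So `D = d!` works.
-/

open Polynomial
open scoped Nat fwdDiff

lemma dZ_nonneg (x : ℝ) : 0 ≤ dZ x := abs_nonneg _

lemma dZ_sub_intCast (x : ℝ) (m : ℤ) : dZ (x - m) = dZ x := by
  simp only [dZ, round_sub_intCast, Int.cast_sub]
  ring_nf

lemma dZ_add_le (x y : ℝ) : dZ (x + y) ≤ dZ x + dZ y :=
  calc dZ (x + y) ≤ |x + y - ↑(round x + round y)| := round_le _ _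
    _ = |(x - round x) + (y - round y)| := by push_cast; ring_nf
    _ ≤ dZ x + dZ y := abs_add_le _ _

lemma dZ_intCast_mul_le (m : ℤ) (x : ℝ) : dZ (m * x) ≤ |(m : ℝ)| * dZ x :=
  calc dZ (m * x) ≤ |m * x - ↑(m * round x)| := round_le _ _
    _ = |(m : ℝ)| * dZ x := by rw [dZ, ← abs_mul]; push_cast; ring_nf

lemma dZ_sum_intCast_mul_le {ι : Type*} (s : Finset ι) (c : ι → ℤ) (x : ι → ℝ) :
    dZ (∑ j ∈ s, (c j : ℝ) * x j) ≤ ∑ j ∈ s, |(c j : ℝ)| * dZ (x j) := by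
  classical
  induction s using Finset.induction_on with
  | empty => simp [dZ]
  | insert a s ha ih =>
    rw [sum_insert ha, sum_insert ha]
    exact (dZ_add_le _ _).trans (add_le_add (dZ_intCast_mul_le _ _) ih)

theorem Polynomial.eq_sum_fwdDiff_iter_div_factorial_mul_descPochhammer {K : Type*} [Field K]
    [CharZero K] {P : K[X]} {d : ℕ} (hP : P.natDegree ≤ d) :
    P = ∑ k ∈ range (d + 1), C (Δ_[1] ^[k] P.eval 0 / k !) * descPochhammer K k := by
  refine eq_of_infinite_eval_eq _ _ <|
    (Set.infinite_range_of_injective Nat.cast_injective).mono ?_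
  rintro _ ⟨n, rfl⟩
  have hnewton := shift_eq_sum_fwdDiff_iter 1 P.eval n 0
  simp only [zero_add, nsmul_one] at hnewton
  simp only [Set.mem_ofPred_eq, eval_finsetSum, eval_mul, eval_C,
    descPochhammer_eval_eq_descFactorial, Nat.descFactorial_eq_factorial_mul_choose]
  rw [hnewton]
  calc ∑ k ∈ range (n + 1), n.choose k • Δ_[1] ^[k] P.eval 0
      = ∑ k ∈ range (n + d + 1), n.choose k • Δ_[1] ^[k] P.eval 0 := by
        refine sum_subset (range_subset_range.2 (by omega)) fun k _ hk => ?_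
        rw [Nat.choose_eq_zero_of_lt (by simpa using hk), zero_smul]
    _ = ∑ k ∈ range (d + 1), n.choose k • Δ_[1] ^[k] P.eval 0 := by
        refine (sum_subset (range_subset_range.2 (by omega)) fun k _ hk => ?_).symm
        rw [fwdDiff_iter_eq_zero_of_degree_lt (by simp at hk; omega), Pi.zero_apply, smul_zero]
    _ = _ := by
        refine sum_congr rfl fun k _ => ?_
        have : (k ! : K) ≠ 0 := Nat.cast_ne_zero.2 k.factorial_ne_zero
        rw [nsmul_eq_mul]; push_cast; field_simp

theorem fwdDiff_iter_mem_bot {M R : Type*} [AddCommMonoid M] [Ring R] (h y : M) (f : M → R)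
    (n : ℕ) (hf : ∀ j ≤ n, f (y + j • h) ∈ (⊥ : Subring R)) :
    Δ_[h] ^[n] f y ∈ (⊥ : Subring R) := by
  rw [fwdDiff_iter_eq_sum_shift]
  exact Subring.sum_mem _ fun j hj => Subring.zsmul_mem _ (hf j (by simp at hj; omega)) _

/-- `factorialChoose d j = d! * (X choose j)` for `j ≤ d`. -/
noncomputable def factorialChoose (d j : ℕ) : ℤ[X] :=
  C ((d ! / j ! : ℕ) : ℤ) * descPochhammer ℤ j

lemma map_factorialChoose {K : Type*} [Field K] [CharZero K] {d j : ℕ} (hj : j ≤ d) :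
    (factorialChoose d j).map (Int.castRingHom K) = C ((d ! : K) / j !) * descPochhammer K j := by
  rw [factorialChoose, Polynomial.map_mul, map_C, descPochhammer_map, eq_intCast, Int.cast_natCast,
    Nat.cast_div (Nat.factorial_dvd_factorial hj) (Nat.cast_ne_zero.2 j.factorial_ne_zero)]

lemma coeff_factorialChoose_of_lt {d i j : ℕ} (hj : j < i) : (factorialChoose d j).coeff i = 0 :=
  coeff_eq_zero_of_natDegree_lt <|
    (natDegree_C_mul_le _ _).trans_lt ((descPochhammer_natDegree ℤ j).symm ▸ hj)

theorem Polynomial.C_factorial_mul_mem_lifts {K : Type*} [Field K] [CharZero K] {P : K[X]} {d : ℕ}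
    (hP : P.natDegree ≤ d) (hint : ∀ n ≤ d, P.eval (n : K) ∈ (⊥ : Subring K)) :
    C (d ! : K) * P ∈ lifts (Int.castRingHom K) := by
  rw [eq_sum_fwdDiff_iter_div_factorial_mul_descPochhammer hP, mul_sum]
  refine Subsemiring.sum_mem _ fun k hk => ?_
  have hkd : k ≤ d := by simpa [Nat.lt_succ_iff] using hk
  obtain ⟨m, hm⟩ := Subring.mem_bot.1 <|
    fwdDiff_iter_mem_bot 1 0 P.eval k fun j hj => by simpa using hint j (hj.trans hkd)
  rw [← hm, ← mul_assoc, ← C_mul, mul_div_left_comm, C_mul, mul_assoc, ← map_factorialChoose hkd]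
  exact base_mul_mem_lifts m ⟨_, rfl⟩

lemma exists_factorial_mul_eq_sum_sub_intCast {d : ℕ} {α β : ℕ → ℝ}
    (h : ∀ n ≤ d, ∃ k : ℤ, (∑ i ∈ range (d + 1), α i * (n.choose i : ℝ)) -
      (∑ i ∈ range (d + 1), β i * (n : ℝ) ^ i) = k) {i : ℕ} (hi : i ≤ d) :
    ∃ m : ℤ, (d ! : ℝ) * β i =
      ∑ j ∈ range (d + 1), ((factorialChoose d j).coeff i : ℝ) * α j - m := by
  let P : ℝ[X] := ∑ j ∈ range (d + 1), C (α j / j !) * descPochhammer ℝ j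
  let Q : ℝ[X] := ∑ j ∈ range (d + 1), C (β j) * X ^ j
  have hdeg : (P - Q).natDegree ≤ d := by
    refine (natDegree_sub_le _ _).trans (max_le ?_ ?_) <;>
      apply natDegree_sum_le_of_forall_le <;> intro j hj <;>
      have hj : j ≤ d := by simpa [Nat.lt_succ_iff] using hj
    · exact (natDegree_C_mul_le _ _).trans ((descPochhammer_natDegree ℝ j).trans_le hj)
    · exact (natDegree_C_mul_X_pow_le _ _).trans hj
  have heval : ∀ n ≤ d, (P - Q).eval (n : ℝ) ∈ (⊥ : Subring ℝ) := fun n hn => by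
    obtain ⟨k, hk⟩ := h n hn
    refine Subring.mem_bot.2 ⟨k, hk.symm.trans ?_⟩
    simp only [P, Q, eval_sub, eval_finsetSum, eval_mul, eval_C, eval_pow, eval_X,
      descPochhammer_eval_eq_descFactorial, Nat.descFactorial_eq_factorial_mul_choose]
    congr 1
    refine sum_congr rfl fun j _ => ?_
    have : (j ! : ℝ) ≠ 0 := Nat.cast_ne_zero.2 j.factorial_ne_zero
    push_cast; field_simp
  obtain ⟨m, hm⟩ := (lifts_iff_coeff_lifts _).1 (C_factorial_mul_mem_lifts hdeg heval) i
  have hP : (d ! : ℝ) * P.coeff i =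
      ∑ j ∈ range (d + 1), ((factorialChoose d j).coeff i : ℝ) * α j := by
    simp only [P, finsetSum_coeff, mul_sum]
    refine sum_congr rfl fun j hj => ?_
    rw [← eq_intCast (Int.castRingHom ℝ), ← coeff_map,
      map_factorialChoose (by simpa [Nat.lt_succ_iff] using hj), coeff_C_mul, coeff_C_mul]
    ring
  have hQ : Q.coeff i = β i := by
    simp [Q, Nat.lt_succ_iff.2 hi]
  refine ⟨m, ?_⟩
  rw [coeff_C_mul, coeff_sub, hQ, eq_intCast] at hm
  linear_combination hm + hP

lemma pow_mul_dZ_sum_le {d N : ℕ} (hN : 1 ≤ N) {α : ℕ → ℝ} {S : ℝ}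
    (hS : ∀ j ∈ Icc 1 d, (N : ℝ) ^ j * dZ (α j) ≤ S) {i : ℕ} (hi : 1 ≤ i) :
    (N : ℝ) ^ i * dZ (∑ j ∈ range (d + 1), ((factorialChoose d j).coeff i : ℝ) * α j) ≤
      (∑ j ∈ range (d + 1), |((factorialChoose d j).coeff i : ℝ)|) * S := by
  refine (mul_le_mul_of_nonneg_left (dZ_sum_intCast_mul_le _ _ _) (by positivity)).trans ?_
  rw [mul_sum, sum_mul]
  refine sum_le_sum fun j hj => ?_
  rcases lt_or_ge j i with hji | hij
  · simp [coeff_factorialChoose_of_lt hji]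
  calc (N : ℝ) ^ i * (|((factorialChoose d j).coeff i : ℝ)| * dZ (α j))
      ≤ |((factorialChoose d j).coeff i : ℝ)| * ((N : ℝ) ^ j * dZ (α j)) := by
        rw [mul_left_comm]
        gcongr
        · exact dZ_nonneg _
        · exact_mod_cast hN
    _ ≤ |((factorialChoose d j).coeff i : ℝ)| * S := by
        gcongr
        exact hS j (mem_Icc.2 ⟨hi.trans hij, by simpa [Nat.lt_succ_iff] using hj⟩)

/-- If a polynomial of degree `d` with values in `ℝ/ℤ` is written both in the binomial
basis with coefficients `α i` and in the monomial basis with coefficients `β i`, then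
there is a positive integer `D = O_d(1)` such that
`‖D β i‖_{ℝ/ℤ} ≪_d N^{-i} ‖f‖_{C^∞[N]}` for `i = 1, …, d`, where
`‖f‖_{C^∞[N]} = max_{1 ≤ i ≤ d} N^i ‖α i‖_{ℝ/ℤ}` (here bounded above by `S`). -/
theorem stmt_1 (d : ℕ) :
    ∃ C : ℝ, 0 < C ∧ ∀ (N : ℕ), 1 ≤ N → ∀ (α β : ℕ → ℝ),
      (∀ n : ℕ, ∃ k : ℤ,
          (∑ i ∈ range (d + 1), α i * (n.choose i : ℝ)) -
            (∑ i ∈ range (d + 1), β i * (n : ℝ) ^ i) = (k : ℝ)) →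
      ∀ S : ℝ, (∀ i ∈ Icc 1 d, (N : ℝ) ^ i * dZ (α i) ≤ S) →
      ∃ D : ℕ, 0 < D ∧ (D : ℝ) ≤ C ∧
        ∀ i ∈ Icc 1 d, (N : ℝ) ^ i * dZ ((D : ℝ) * β i) ≤ C * S := by
  set row : ℕ → ℝ := fun i => ∑ j ∈ range (d + 1), |((factorialChoose d j).coeff i : ℝ)|
  have hrow : ∀ i, 0 ≤ row i := fun i => sum_nonneg fun _ _ => abs_nonneg _
  refine ⟨d ! + ∑ i ∈ range (d + 1), row i, by positivity, fun N hN α β h S hS => ?_⟩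
  refine ⟨d !, d.factorial_pos, le_add_of_nonneg_right (sum_nonneg fun i _ => hrow i),
    fun i hi => ?_⟩
  obtain ⟨hi1, hid⟩ := mem_Icc.1 hi
  obtain ⟨m, hm⟩ := exists_factorial_mul_eq_sum_sub_intCast (fun n _ => h n) hid
  have hS0 : 0 ≤ S := (mul_nonneg (by positivity) (dZ_nonneg _)).trans (hS i hi)
  calc (N : ℝ) ^ i * dZ ((d ! : ℕ) * β i)
      = (N : ℝ) ^ i * dZ (∑ j ∈ range (d + 1), ((factorialChoose d j).coeff i : ℝ) * α j) := by
        rw [hm, dZ_sub_intCast]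
    _ ≤ row i * S := pow_mul_dZ_sum_le hN hS hi1
    _ ≤ (d ! + ∑ i ∈ range (d + 1), row i) * S := by
        gcongr
        exact (single_le_sum (fun i _ => hrow i) (mem_range.2 (Nat.lt_succ_of_le hid))).trans
          (le_add_of_nonneg_left (by positivity))
end

section
/- Assume the two-point Chowla conjecture in the form: for all integers h₁ ≠ h₂, lim_{N→∞} (1/N) ∑_{n=1}^{N} μ(n+h₁)μ(n+h₂) = 0, together with lim_{N→∞}(1/N)∑_{n=1}^N μ(n)² = 6/π². Then for every integer s ≥ 1 and h ≥ 1, limsup_{N→∞} (1/N) ∑_{n=1}^{N} |∑_{l=1}^{h} μ(n+ls)|² = 6h/π², and consequently limsup_{N→∞} (1/N) ∑_{n=1}^{N} |∑_{l=1}^{h} μ(n+ls)| ≤ c·√h for an absolute constant c independent of s. -/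
open Finset Filter ArithmeticFunction Real

/-!
Expanding the square, the mean square of `∑_{l ≤ h} μ(n + ls)` is the sum of the `h²`
correlation averages of `μ(n + ls)` and `μ(n + l's)`. The `h` diagonal ones are shifted mean
squares of `μ`, which tend to `6/π²`; the off-diagonal ones tend to `0` by the two-point Chowla
conjecture, since `ls ≠ l's` when `s ≥ 1`. By Cauchy–Schwarz the first moment is then at most
`√(6h/π²) ≤ √h`.
-/

noncomputable def cesaroMean (g : ℕ → ℝ) (N : ℕ) : ℝ := (1 / (N : ℝ)) * ∑ n ∈ Icc 1 N, g n

lemma cesaroMean_nonneg {g : ℕ → ℝ} (hg : ∀ n, 0 ≤ g n) (N : ℕ) : 0 ≤ cesaroMean g N :=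
  mul_nonneg (by positivity) (sum_nonneg fun n _ => hg n)

lemma cesaroMean_sum {ι : Type*} (t : Finset ι) (f : ι → ℕ → ℝ) (N : ℕ) :
    cesaroMean (fun n => ∑ i ∈ t, f i n) N = ∑ i ∈ t, cesaroMean (f i) N := by
  simp only [cesaroMean, mul_sum]
  exact sum_comm

lemma sum_Icc_comp_add_add_sum_Icc (g : ℕ → ℝ) (N k : ℕ) :
    ∑ n ∈ Icc 1 N, g (n + k) + ∑ n ∈ Icc 1 k, g n = ∑ n ∈ Icc 1 (N + k), g n := by
  induction N with
  | zero => simp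
  | succ N ih =>
    rw [sum_Icc_succ_top (by omega), Nat.add_right_comm, sum_Icc_succ_top (by omega), ← ih]
    ring

lemma tendsto_cesaroMean_comp_add {g : ℕ → ℝ} {L : ℝ}
    (hg : Tendsto (cesaroMean g) atTop (nhds L)) (k : ℕ) :
    Tendsto (cesaroMean fun n => g (n + k)) atTop (nhds L) := by
  have hlim : Tendsto (fun N : ℕ => (1 + k / (N : ℝ)) * cesaroMean g (N + k)
      - (∑ n ∈ Icc 1 k, g n) / N) atTop (nhds ((1 + 0) * L - 0)) :=
    ((tendsto_const_nhds.add (tendsto_const_div_atTop_nhds_zero_nat _)).mul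
      (hg.comp (tendsto_add_atTop_nat k))).sub (tendsto_const_div_atTop_nhds_zero_nat _)
  rw [add_zero, one_mul, sub_zero] at hlim
  refine hlim.congr' ?_
  filter_upwards [eventually_ne_atTop 0] with N hN
  have hN : (N : ℝ) ≠ 0 := Nat.cast_ne_zero.mpr hN
  have hNk : ((N + k : ℕ) : ℝ) ≠ 0 := Nat.cast_ne_zero.mpr (by omega)
  simp only [cesaroMean, ← sum_Icc_comp_add_add_sum_Icc g N k]
  field_simp
  push_cast
  ring

lemma tendsto_cesaroMean_sq_sum {ι : Type*} [DecidableEq ι] (t : Finset ι) (f : ι → ℕ → ℝ)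
    {c : ℝ}
    (hcorr : ∀ i ∈ t, ∀ j ∈ t, Tendsto (cesaroMean fun n => f i n * f j n) atTop
      (nhds (if i = j then c else 0))) :
    Tendsto (cesaroMean fun n => (∑ i ∈ t, f i n) ^ 2) atTop (nhds (#t * c)) := by
  have hexpand : ∀ N, cesaroMean (fun n => (∑ i ∈ t, f i n) ^ 2) N
      = ∑ i ∈ t, ∑ j ∈ t, cesaroMean (fun n => f i n * f j n) N := by
    intro N
    simp only [sq, sum_mul_sum, cesaroMean_sum]
  have hlimit : (#t * c : ℝ) = ∑ i ∈ t, ∑ j ∈ t, if i = j then c else 0 := by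
    simp
  rw [funext hexpand, hlimit]
  exact tendsto_finsetSum _ fun i hi => tendsto_finsetSum _ fun j hj => hcorr i hi j hj

lemma sq_cesaroMean_le_cesaroMean_sq (g : ℕ → ℝ) (N : ℕ) :
    cesaroMean g N ^ 2 ≤ cesaroMean (fun n => g n ^ 2) N := by
  have hcs := sum_div_card_sq_le_sum_sq_div_card (s := Icc 1 N) (f := g)
  simp only [Nat.card_Icc, Nat.add_sub_cancel] at hcs
  simpa only [cesaroMean, one_div_mul_eq_div] using hcs

lemma limsup_cesaroMean_abs_le_sqrt {g : ℕ → ℝ} {L : ℝ}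
    (hg : Tendsto (cesaroMean fun n => g n ^ 2) atTop (nhds L)) :
    limsup (cesaroMean fun n => |g n|) atTop ≤ √L := by
  have hle : ∀ N, cesaroMean (fun n => |g n|) N ≤ √(cesaroMean (fun n => g n ^ 2) N) := by
    intro N
    refine (le_abs_self _).trans (abs_le_sqrt ?_)
    simpa only [sq_abs] using sq_cesaroMean_le_cesaroMean_sq (fun n => |g n|) N
  rw [← hg.sqrt.limsup_eq]
  exact limsup_le_limsup (Eventually.of_forall hle)
    (isCoboundedUnder_le_of_le atTop fun N => cesaroMean_nonneg (fun n => abs_nonneg _) N)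
    hg.sqrt.isBoundedUnder_le

lemma tendsto_cesaroMean_sq_sum_moebius_shift
    (hchowla : ∀ h₁ h₂ : ℕ, h₁ ≠ h₂ →
      Tendsto (cesaroMean fun n => ((moebius (n + h₁) : ℤ) : ℝ) * ((moebius (n + h₂) : ℤ) : ℝ))
        atTop (nhds 0))
    (hmeanSq : Tendsto (cesaroMean fun n => ((moebius n : ℤ) : ℝ) ^ 2) atTop (nhds (6 / π ^ 2)))
    {s : ℕ} (hs : 1 ≤ s) (h : ℕ) :
    Tendsto (cesaroMean fun n => (∑ l ∈ Icc 1 h, ((moebius (n + l * s) : ℤ) : ℝ)) ^ 2) atTop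
      (nhds (6 * h / π ^ 2)) := by
  have hcard : (6 * h / π ^ 2 : ℝ) = #(Icc 1 h) * (6 / π ^ 2) := by
    rw [Nat.card_Icc, Nat.add_sub_cancel]
    ring
  rw [hcard]
  refine tendsto_cesaroMean_sq_sum _ (fun l n => ((moebius (n + l * s) : ℤ) : ℝ))
    fun l _ l' _ => ?_
  split_ifs with hll'
  · subst hll'
    simpa only [← sq] using tendsto_cesaroMean_comp_add hmeanSq (l * s)
  · exact hchowla _ _ fun heq => hll' (Nat.eq_of_mul_eq_mul_right hs heq)

lemma sqrt_six_mul_div_pi_sq_le (x : ℝ) (hx : 0 ≤ x) : √(6 * x / π ^ 2) ≤ √x := by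
  have hpi : 6 ≤ π ^ 2 := by nlinarith [pi_gt_three]
  exact sqrt_le_sqrt ((div_le_iff₀ (by positivity)).mpr (by nlinarith))

/-- Assuming the two-point Chowla conjecture and the mean square of the Möbius function,
for all `s ≥ 1`, `h ≥ 1` the limsup of `(1/N)∑_{n≤N}|∑_{l=1}^h μ(n+ls)|²` equals
`6h/π²`, and consequently the first moment is at most `c√h` for an absolute `c`. -/
theorem stmt_3
    (h1 : ∀ h₁ h₂ : ℕ, h₁ ≠ h₂ →
      Tendsto (fun N : ℕ => (1 / (N : ℝ)) *
        ∑ n ∈ Icc 1 N, ((moebius (n + h₁) : ℤ) : ℝ) * ((moebius (n + h₂) : ℤ) : ℝ))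
        atTop (nhds 0))
    (h2 : Tendsto (fun N : ℕ => (1 / (N : ℝ)) *
        ∑ n ∈ Icc 1 N, ((moebius n : ℤ) : ℝ) ^ 2) atTop (nhds (6 / π ^ 2))) :
    (∀ s h : ℕ, 1 ≤ s → 1 ≤ h →
      limsup (fun N : ℕ => (1 / (N : ℝ)) *
        ∑ n ∈ Icc 1 N, |∑ l ∈ Icc 1 h, ((moebius (n + l * s) : ℤ) : ℝ)| ^ 2) atTop
        = 6 * (h : ℝ) / π ^ 2) ∧
    ∃ c : ℝ, 0 < c ∧ ∀ s h : ℕ, 1 ≤ s → 1 ≤ h →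
      limsup (fun N : ℕ => (1 / (N : ℝ)) *
        ∑ n ∈ Icc 1 N, |∑ l ∈ Icc 1 h, ((moebius (n + l * s) : ℤ) : ℝ)|) atTop
        ≤ c * Real.sqrt h := by
  have hsq := fun s (hs : 1 ≤ s) h => tendsto_cesaroMean_sq_sum_moebius_shift h1 h2 hs h
  refine ⟨fun s h hs _ => ?_, 1, one_pos, fun s h hs _ => ?_⟩
  · simp_rw [sq_abs]
    exact (hsq s hs h).limsup_eq
  · rw [one_mul]
    exact (limsup_cesaroMean_abs_le_sqrt (hsq s hs h)).trans
      (sqrt_six_mul_div_pi_sq_le h h.cast_nonneg)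
end

section
/- Let f be a multiplicative function with |f(n)| ≤ 1 for all n, and let f₁ be the completely multiplicative function defined by f₁(p) = f(p) at all primes p. Define α = f * (μ·f₁) (Dirichlet convolution), so that f = f₁ * α. Then α is multiplicative, α(p) = 0 for every prime p, |α(p^j)| ≤ 2 for all j ≥ 2, and consequently ∑_{n=1}^{∞} |α(n)| n^{−3/4} converges. -/
/-!
Because `f₁` is completely multiplicative, the pointwise product with `f₁` is a ring
endomorphism for Dirichlet convolution, so `f₁ * (μ·f₁) = (ζ * μ)·f₁ = 1` and `f = f₁ * α`.
At a prime power only the divisors `1` and `p` of `p^{k+1}` survive in `f * (μ·f₁)`, so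
`α(p^{k+1}) = f(p^{k+1}) - f(p^k) f(p)`: this vanishes for `k = 0` and has modulus at most `2`.
Hence `α` is supported on powerful numbers `n = a²b³`, where `|α(n)| ≤ 2^{ω(n)} ≤ d(a) d(b)`, and
`∑ |α(n)| n^{-σ}` is dominated by `(∑ d(a) a^{-2σ}) (∑ d(b) b^{-3σ})` for every `σ > 1/2`.
-/

open ArithmeticFunction Finset
open scoped ArithmeticFunction.Moebius ArithmeticFunction.zeta

namespace ArithmeticFunction

variable {R : Type*}

theorem pmul_mul_pmul_of_map_mul [CommSemiring R] {c : ArithmeticFunction R}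
    (hc : ∀ m n, c (m * n) = c m * c n) (f g : ArithmeticFunction R) :
    f.pmul c * g.pmul c = (f * g).pmul c := by
  ext n
  simp only [mul_apply, pmul_apply, sum_mul]
  refine sum_congr rfl fun x hx => ?_
  rw [← (Nat.mem_divisorsAntidiagonal.mp hx).1, hc]
  ring

theorem mul_pmul_moebius_eq_one [CommRing R] {c : ArithmeticFunction R} (hc_one : c 1 = 1)
    (hc : ∀ m n, c (m * n) = c m * c n) : c * (μ : ArithmeticFunction R).pmul c = 1 := by
  calc c * (μ : ArithmeticFunction R).pmul c
      = (ζ : ArithmeticFunction R).pmul c * (μ : ArithmeticFunction R).pmul c := by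
        rw [zeta_pmul]
    _ = (1 : ArithmeticFunction R).pmul c := by
        rw [pmul_mul_pmul_of_map_mul hc, coe_zeta_mul_coe_moebius]
    _ = 1 := by
        ext n
        rw [pmul_apply, one_apply]
        split_ifs with h
        · rw [h, hc_one, one_mul]
        · rw [zero_mul]

theorem mul_pmul_moebius_apply_prime_pow [CommRing R] (f : ArithmeticFunction R)
    {c : ArithmeticFunction R} (hc_one : c 1 = 1) {p : ℕ} (hp : p.Prime) (k : ℕ) :
    (f * (μ : ArithmeticFunction R).pmul c) (p ^ (k + 1)) =
      f (p ^ (k + 1)) - f (p ^ k) * c p := by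
  have hdiv : ∀ i ≤ k + 1, p ^ (k + 1) / p ^ i = p ^ (k + 1 - i) := fun i hi =>
    Nat.pow_div hi hp.pos
  rw [mul_apply,
    Nat.sum_divisorsAntidiagonal' (f := fun a b => f a * (μ : ArithmeticFunction R).pmul c b),
    Nat.sum_divisors_prime_pow hp, sum_range_succ', sum_range_succ']
  have hvanish : ∀ i ∈ range k, f (p ^ (k + 1) / p ^ (i + 1 + 1)) *
      (μ : ArithmeticFunction R).pmul c (p ^ (i + 1 + 1)) = 0 := by
    intro i _
    rw [pmul_apply, intCoe_apply, moebius_apply_prime_pow hp (by omega), if_neg (by omega)]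
    simp
  rw [sum_eq_zero hvanish, hdiv _ (by omega), hdiv _ (by omega)]
  simp only [zero_add, pow_one, pow_zero, Nat.add_sub_cancel, Nat.sub_zero, pmul_apply,
    intCoe_apply, moebius_apply_prime hp, moebius_apply_one, hc_one]
  push_cast
  ring

end ArithmeticFunction

theorem Nat.factorization_pos_of_mem_primeFactors {n p : ℕ} (hp : p ∈ n.primeFactors) :
    0 < n.factorization p :=
  Nat.pos_of_ne_zero ((Finsupp.mem_support_iff (f := n.factorization)).mp hp)

def Nat.Powerful (n : ℕ) : Prop := ∀ p ∈ n.primeFactors, 2 ≤ n.factorization p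

theorem Nat.Powerful.exists_sq_mul_cube_eq {n : ℕ} (hn : n.Powerful) :
    ∃ a b : ℕ, a ^ 2 * b ^ 3 = n := by
  -- `n = m² s` with `s` squarefree; each prime of `s` occurs in `n` at least twice, so `s ∣ m`.
  obtain ⟨s, m, hmsn, hs⟩ := Nat.sq_mul_squarefree n
  rcases eq_or_ne n 0 with rfl | hn0
  · exact ⟨0, 0, rfl⟩
  have hs0 : s ≠ 0 := by rintro rfl; simp_all
  have hm0 : m ≠ 0 := by rintro rfl; simp_all
  have hsm : s ∣ m := by
    rw [← Nat.factorization_le_iff_dvd hs0 hm0]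
    intro p
    have hfact : n.factorization p = 2 * m.factorization p + s.factorization p := by
      simp [← hmsn, Nat.factorization_mul (pow_ne_zero 2 hm0) hs0]
    have hle_one := hs.natFactorization_le_one p
    by_cases hp : p ∈ n.primeFactors
    · have := hn p hp
      omega
    · have : n.factorization p = 0 := Finsupp.notMem_support_iff.mp hp
      omega
  obtain ⟨c, rfl⟩ := hsm
  exact ⟨c, s, by rw [← hmsn]; ring⟩

theorem Nat.two_pow_card_primeFactors_le_card_divisors {n : ℕ} (hn : n ≠ 0) :
    2 ^ #n.primeFactors ≤ #n.divisors := by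
  rw [Nat.card_divisors hn, ← prod_const]
  exact prod_le_prod' fun p hp => by
    have := Nat.factorization_pos_of_mem_primeFactors hp
    omega

theorem summable_of_le_comp {β γ : Type*} {g : β → ℝ} {H : γ → ℝ} (φ : γ → β)
    (hH : Summable H) (hg : ∀ b, 0 ≤ g b) (hφ : ∀ b, g b ≠ 0 → b ∈ Set.range φ)
    (hle : ∀ c, g (φ c) ≤ H c) : Summable g := by
  choose ψ hψ using fun b : Function.support g => hφ b b.2
  have hψ_inj : Function.Injective ψ := fun x y h => Subtype.ext (by rw [← hψ x, ← hψ y, h])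
  have hsupp : Summable fun b : Function.support g => g b :=
    (hH.comp_injective hψ_inj).of_nonneg_of_le (fun b => hg b) fun b => hψ b ▸ hle (ψ b)
  exact (Subtype.val_injective.summable_iff fun b hb =>
    Function.notMem_support.mp fun h => hb ⟨⟨b, h⟩, rfl⟩).mp hsupp

theorem summable_card_divisors_mul_rpow_neg {s : ℝ} (hs : 1 < s) :
    Summable fun n : ℕ => (#n.divisors : ℝ) * (n : ℝ) ^ (-s) := by
  have hζ : LSeriesSummable (fun n => ((ζ : ArithmeticFunction ℂ) n)) s :=
    (LSeriesSummable_congr _ fun hn => by simp [natCoe_apply, hn]).mpr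
      (LSeriesSummable_zeta_iff.mpr (by simpa using hs))
  refine (LSeriesSummable_mul hζ hζ).norm.congr fun n => ?_
  rcases eq_or_ne n 0 with rfl | hn
  · simp
  have hσ : (ζ : ArithmeticFunction ℂ) * ζ = (sigma 0 : ArithmeticFunction ℕ) := by
    rw [← natCoe_mul, ← zeta_mul_pow_eq_sigma, pow_zero_eq_zeta]
  rw [LSeries.norm_term_eq, if_neg hn, hσ, natCoe_apply, sigma_zero_apply, Complex.norm_natCast,
    Complex.ofReal_re, Real.rpow_neg (Nat.cast_nonneg n), div_eq_mul_inv]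

namespace ArithmeticFunction.IsMultiplicative

variable {R : Type*}

theorem apply_eq_zero_of_not_powerful [CommMonoidWithZero R] {α : ArithmeticFunction R}
    (hα : α.IsMultiplicative) (h_prime : ∀ p : ℕ, p.Prime → α p = 0) {n : ℕ}
    (hn : ¬ n.Powerful) : α n = 0 := by
  obtain ⟨p, hp, hlt⟩ : ∃ p ∈ n.primeFactors, n.factorization p < 2 := by
    simpa only [Nat.Powerful, not_forall, not_le, exists_prop] using hn
  have hn0 : n ≠ 0 := (Nat.mem_primeFactors.mp hp).2.2
  have hp_prime := Nat.prime_of_mem_primeFactors hp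
  have hexp : n.factorization p = 1 := by
    have := Nat.factorization_pos_of_mem_primeFactors hp
    omega
  rw [hα.multiplicative_factorization α hn0, Nat.prod_factorization_eq_prod_primeFactors]
  exact prod_eq_zero hp (by rw [hexp, pow_one, h_prime p hp_prime])

theorem norm_apply_le_pow_card_primeFactors [NormedCommRing R] [NormOneClass R]
    {α : ArithmeticFunction R} (hα : α.IsMultiplicative) {C : ℝ}
    (h_pow : ∀ p k : ℕ, p.Prime → 0 < k → ‖α (p ^ k)‖ ≤ C) (n : ℕ) :
    ‖α n‖ ≤ C ^ #n.primeFactors := by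
  rcases eq_or_ne n 0 with rfl | hn0
  · simp
  rw [hα.multiplicative_factorization α hn0, Nat.prod_factorization_eq_prod_primeFactors,
    ← prod_const]
  exact (Finset.norm_prod_le _ _).trans (prod_le_prod (fun _ _ => norm_nonneg _) fun p hp =>
    h_pow p _ (Nat.prime_of_mem_primeFactors hp) (Nat.factorization_pos_of_mem_primeFactors hp))

theorem norm_apply_sq_mul_cube_le [NormedCommRing R] [NormOneClass R]
    {α : ArithmeticFunction R} (hα : α.IsMultiplicative)
    (h_pow : ∀ p k : ℕ, p.Prime → 0 < k → ‖α (p ^ k)‖ ≤ 2) (a b : ℕ) :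
    ‖α (a ^ 2 * b ^ 3)‖ ≤ #a.divisors * #b.divisors := by
  rcases eq_or_ne a 0 with rfl | ha
  · simp
  rcases eq_or_ne b 0 with rfl | hb
  · simp
  have hpf : (a ^ 2 * b ^ 3).primeFactors = a.primeFactors ∪ b.primeFactors := by
    rw [Nat.primeFactors_mul (by positivity) (by positivity), Nat.primeFactors_pow _ two_ne_zero,
      Nat.primeFactors_pow _ three_ne_zero]
  calc ‖α (a ^ 2 * b ^ 3)‖ ≤ 2 ^ #(a.primeFactors ∪ b.primeFactors) :=
        hpf ▸ norm_apply_le_pow_card_primeFactors hα h_pow _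
    _ ≤ 2 ^ #a.primeFactors * 2 ^ #b.primeFactors := by
        rw [← pow_add]
        exact pow_le_pow_right₀ one_le_two (card_union_le _ _)
    _ ≤ #a.divisors * #b.divisors := by
        exact_mod_cast Nat.mul_le_mul (Nat.two_pow_card_primeFactors_le_card_divisors ha)
          (Nat.two_pow_card_primeFactors_le_card_divisors hb)

theorem summable_norm_mul_rpow_neg [NormedCommRing R] [NormOneClass R]
    {α : ArithmeticFunction R} (hα : α.IsMultiplicative) (h_prime : ∀ p : ℕ, p.Prime → α p = 0)
    (h_pow : ∀ p k : ℕ, p.Prime → 0 < k → ‖α (p ^ k)‖ ≤ 2) {σ : ℝ} (hσ : 1 / 2 < σ) :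
    Summable fun n : ℕ => ‖α n‖ * (n : ℝ) ^ (-σ) := by
  have hH := (summable_card_divisors_mul_rpow_neg (s := 2 * σ) (by linarith)).mul_of_nonneg
    (summable_card_divisors_mul_rpow_neg (s := 3 * σ) (by linarith))
    (fun _ => by positivity) (fun _ => by positivity)
  refine summable_of_le_comp (fun ab : ℕ × ℕ => ab.1 ^ 2 * ab.2 ^ 3) hH
    (fun _ => by positivity) (fun n hn => ?_) fun ⟨a, b⟩ => ?_
  · have hpow : n.Powerful := by_contra fun h => hn (by
      rw [hα.apply_eq_zero_of_not_powerful h_prime h, norm_zero, zero_mul])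
    obtain ⟨a, b, hab⟩ := hpow.exists_sq_mul_cube_eq
    exact ⟨(a, b), hab⟩
  · have hsplit : ((a ^ 2 * b ^ 3 : ℕ) : ℝ) ^ (-σ) =
        (a : ℝ) ^ (-(2 * σ)) * (b : ℝ) ^ (-(3 * σ)) := by
      push_cast
      rw [Real.mul_rpow (by positivity) (by positivity), ← Real.rpow_natCast (a : ℝ) 2,
        ← Real.rpow_natCast (b : ℝ) 3, ← Real.rpow_mul (Nat.cast_nonneg a),
        ← Real.rpow_mul (Nat.cast_nonneg b)]
      ring_nf
    calc ‖α (a ^ 2 * b ^ 3)‖ * ((a ^ 2 * b ^ 3 : ℕ) : ℝ) ^ (-σ)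
        ≤ (#a.divisors * #b.divisors) * ((a : ℝ) ^ (-(2 * σ)) * (b : ℝ) ^ (-(3 * σ))) := by
          rw [hsplit]
          gcongr
          exact hα.norm_apply_sq_mul_cube_le h_pow a b
      _ = _ := by ring

end ArithmeticFunction.IsMultiplicative

/-- For a 1-bounded multiplicative `f` and the completely multiplicative `f₁` agreeing
with `f` at primes, the function `α = f * (μ·f₁)` (Dirichlet convolution) is
multiplicative, vanishes at primes, satisfies `|α(p^j)| ≤ 2` for `j ≥ 2`, the series
`∑ |α(n)| n^{-3/4}` converges, and `f = f₁ * α`. -/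
theorem stmt_7 (f f₁ α : ArithmeticFunction ℂ)
    (hf : f.IsMultiplicative) (hf_bd : ∀ n, ‖f n‖ ≤ 1)
    (hf₁_one : f₁ 1 = 1) (hf₁_mul : ∀ m n : ℕ, f₁ (m * n) = f₁ m * f₁ n)
    (hf₁_eq : ∀ p : ℕ, p.Prime → f₁ p = f p)
    (hα : ∀ n : ℕ, α n =
      ∑ d ∈ n.divisors, f d * (((moebius (n / d) : ℤ) : ℂ) * f₁ (n / d))) :
    α.IsMultiplicative ∧
    (∀ p : ℕ, p.Prime → α p = 0) ∧
    (∀ p j : ℕ, p.Prime → 2 ≤ j → ‖α (p ^ j)‖ ≤ 2) ∧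
    (Summable fun n : ℕ => ‖α n‖ * (n : ℝ) ^ (-(3 / 4 : ℝ))) ∧
    (∀ n : ℕ, f n = ∑ d ∈ n.divisors, f₁ d * α (n / d)) := by
  have hα_conv : α = f * (μ : ArithmeticFunction ℂ).pmul f₁ := by
    ext n
    rw [hα, mul_apply,
      Nat.sum_divisorsAntidiagonal (f := fun d e => f d * (μ : ArithmeticFunction ℂ).pmul f₁ e)]
    exact sum_congr rfl fun d _ => by rw [pmul_apply, intCoe_apply]
  have hα_mul : α.IsMultiplicative := hα_conv ▸
    hf.mul (isMultiplicative_moebius.intCast.pmul ⟨hf₁_one, fun _ => hf₁_mul _ _⟩)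
  have hα_prime_pow (p k : ℕ) (hp : p.Prime) :
      α (p ^ (k + 1)) = f (p ^ (k + 1)) - f (p ^ k) * f p := by
    rw [hα_conv, mul_pmul_moebius_apply_prime_pow f hf₁_one hp, hf₁_eq p hp]
  have hα_prime (p : ℕ) (hp : p.Prime) : α p = 0 := by
    simpa [hf.map_one] using hα_prime_pow p 0 hp
  have hα_bd (p k : ℕ) (hp : p.Prime) (hk : 0 < k) : ‖α (p ^ k)‖ ≤ 2 := by
    obtain ⟨k, rfl⟩ := Nat.exists_eq_add_one_of_ne_zero hk.ne'
    calc ‖α (p ^ (k + 1))‖ ≤ ‖f (p ^ (k + 1))‖ + ‖f (p ^ k)‖ * ‖f p‖ := by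
          rw [hα_prime_pow p k hp, ← norm_mul]; exact norm_sub_le _ _
      _ ≤ 1 + 1 * 1 := by gcongr <;> apply hf_bd
      _ = 2 := by norm_num
  have hf_eq : f = f₁ * α := by
    rw [hα_conv, mul_left_comm, mul_pmul_moebius_eq_one hf₁_one hf₁_mul, mul_one]
  refine ⟨hα_mul, hα_prime, fun p j hp hj => hα_bd p j hp (by omega),
    hα_mul.summable_norm_mul_rpow_neg hα_prime hα_bd (by norm_num), fun n => ?_⟩
  rw [hf_eq, mul_apply, Nat.sum_divisorsAntidiagonal (f := fun d e => f₁ d * α e)]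
end

section
/- Assume: (i) for all integers h₁ ≠ h₂ and every polynomial Q ∈ ℝ[x], lim_{N→∞} (1/log N) ∑_{n=1}^{N} μ(n+h₁)μ(n+h₂)e(Q(n))/n = 0; and (ii) lim_{N→∞} (1/log N) ∑_{n=1}^{N} μ(n)²/n = 6/π². Then for every P ∈ ℝ[x] and all integers s ≥ 1, h ≥ 1: lim_{N→∞} (1/log N) ∑_{n=1}^{N} (1/n) |(1/h) ∑_{l=1}^{h} μ(n+ls) e(P(n+ls))|² = 6/(π² h). Consequently, by Cauchy–Schwarz, limsup_{N→∞} (1/log N) ∑_{n=1}^{N} (1/n)|(1/h)∑_{l=1}^{h} μ(n+ls)e(P(n+ls))| ≤ √(6/π²)·h^{−1/2}, a bound independent of s. -/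
open Finset Filter ArithmeticFunction Real

/-- `e(α) = e^{2πiα}` -/
noncomputable def e (x : ℝ) : ℂ := Complex.exp (2 * Real.pi * Complex.I * x)

/-!
Expanding the square, the mean square is `h⁻²` times the sum over `l₁, l₂ ≤ h` of the logarithmic
correlations of `μ(n + l₁s) e(P(n + l₁s))` with `μ(n + l₂s) e(P(n + l₂s))`. For `l₁ ≠ l₂` the phase
`P(n + l₁s) - P(n + l₂s)` is again a polynomial in `n`, so (i) kills the correlation. The `h`
diagonal terms are logarithmic averages of `μ(n + ls)²`, which tend to `6/π²` by (ii) because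
shifting a bounded sequence by `m` changes its logarithmic sum by `O(m)`. The first-moment bound is
Cauchy–Schwarz against the weights `1/n`, whose logarithmic average tends to `1`.
-/

open scoped Topology ComplexConjugate

def LogChowlaWithPolynomialPhases : Prop :=
  ∀ h₁ h₂ : ℕ, h₁ ≠ h₂ → ∀ Q : Polynomial ℝ,
    Tendsto (fun N : ℕ => (1 / (Real.log N : ℂ)) * ∑ n ∈ Icc 1 N,
        ((moebius (n + h₁) : ℤ) : ℂ) * ((moebius (n + h₂) : ℤ) : ℂ) *
          e (Q.eval (n : ℝ)) / (n : ℂ)) atTop (𝓝 0)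

def LogMeanMoebiusSq (L : ℝ) : Prop :=
  Tendsto (fun N : ℕ => (1 / Real.log N) * ∑ n ∈ Icc 1 N,
    ((moebius n : ℤ) : ℝ) ^ 2 / (n : ℝ)) atTop (𝓝 L)

lemma tendsto_one_div_log_natCast : Tendsto (fun N : ℕ => 1 / Real.log N) atTop (𝓝 0) := by
  simp only [one_div]
  exact tendsto_inv_atTop_zero.comp (Real.tendsto_log_atTop.comp tendsto_natCast_atTop_atTop)

section BoundedShift

variable {C : ℝ}

lemma abs_sum_Icc_shift_sub_le {g : ℕ → ℝ} (hg : ∀ n, |g n| ≤ C) (m N : ℕ) :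
    |∑ n ∈ Icc 1 N, g (n + m) - ∑ n ∈ Icc 1 N, g n| ≤ 2 * m * C := by
  induction m with
  | zero => simp
  | succ m ih =>
    have htelescope : ∀ N, ∑ n ∈ Icc 1 N, g (n + (m + 1)) - ∑ n ∈ Icc 1 N, g (n + m) =
        g (N + (m + 1)) - g (1 + m) := by
      intro N
      induction N with
      | zero => simp [add_comm]
      | succ N ihN =>
        rw [sum_Icc_succ_top (by omega), sum_Icc_succ_top (by omega)]
        grind
    calc |∑ n ∈ Icc 1 N, g (n + (m + 1)) - ∑ n ∈ Icc 1 N, g n|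
        ≤ |g (N + (m + 1)) - g (1 + m)| + |∑ n ∈ Icc 1 N, g (n + m) - ∑ n ∈ Icc 1 N, g n| := by
          rw [← htelescope]; exact abs_sub_le _ _ _
      _ ≤ (|g (N + (m + 1))| + |g (1 + m)|) + 2 * m * C := by gcongr; exact abs_sub _ _
      _ ≤ 2 * (m + 1 : ℕ) * C := by push_cast; linarith [hg (N + (m + 1)), hg (1 + m)]

lemma abs_sum_Icc_div_sub_div_add_le {b : ℕ → ℝ} (hb : ∀ n, |b n| ≤ C) (m N : ℕ) :
    |∑ n ∈ Icc 1 N, (b n / n - b n / (n + m))| ≤ C * m * (π ^ 2 / 6) := by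
  have hC : 0 ≤ C := (abs_nonneg _).trans (hb 0)
  have hterm : ∀ n ∈ Icc 1 N, |b n / n - b n / (n + m)| ≤ C * m * (1 / (n : ℝ) ^ 2) := by
    intro n hn
    have hn : (0 : ℝ) < n := by exact_mod_cast (mem_Icc.mp hn).1
    rw [show b n / n - b n / (n + m) = b n * (m / (n * (n + m))) by field_simp; ring,
      abs_mul, abs_of_nonneg (a := (m : ℝ) / _) (by positivity), mul_assoc, mul_one_div]
    gcongr
    · exact hb n
    · nlinarith
  calc |∑ n ∈ Icc 1 N, (b n / n - b n / (n + m))|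
      ≤ ∑ n ∈ Icc 1 N, C * m * (1 / (n : ℝ) ^ 2) :=
        (abs_sum_le_sum_abs _ _).trans (sum_le_sum hterm)
    _ ≤ C * m * (π ^ 2 / 6) := by
        rw [← mul_sum]
        gcongr
        exact sum_le_hasSum _ (fun _ _ => by positivity) hasSum_zeta_two

lemma tendsto_logAvg_shift {a : ℕ → ℝ} (ha : ∀ n, |a n| ≤ C) (m : ℕ) {L : ℝ}
    (h : Tendsto (fun N : ℕ => (1 / Real.log N) * ∑ n ∈ Icc 1 N, a n / n) atTop (𝓝 L)) :
    Tendsto (fun N : ℕ => (1 / Real.log N) * ∑ n ∈ Icc 1 N, a (n + m) / n) atTop (𝓝 L) := by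
  have hdiv : ∀ k : ℕ, |a k / k| ≤ C := fun k => by
    rcases k.eq_zero_or_pos with rfl | hk
    · simpa using (abs_nonneg _).trans (ha 0)
    · rw [abs_div, Nat.abs_cast]
      exact (div_le_self (abs_nonneg _) (by exact_mod_cast hk)).trans (ha k)
  have hbound : ∀ N : ℕ,
      ‖∑ n ∈ Icc 1 N, a (n + m) / n - ∑ n ∈ Icc 1 N, a n / n‖ ≤
        C * m * (π ^ 2 / 6) + 2 * m * C := by
    intro N
    have hsplit : ∑ n ∈ Icc 1 N, a (n + m) / n - ∑ n ∈ Icc 1 N, a n / n =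
        ∑ n ∈ Icc 1 N, (a (n + m) / n - a (n + m) / (n + m)) +
          (∑ n ∈ Icc 1 N, a (n + m) / (n + m : ℕ) - ∑ n ∈ Icc 1 N, a n / n) := by
      simp only [sum_sub_distrib, Nat.cast_add]
      ring
    rw [Real.norm_eq_abs, hsplit]
    exact (abs_add_le _ _).trans (add_le_add
      (abs_sum_Icc_div_sub_div_add_le (fun n => ha (n + m)) m N)
      (abs_sum_Icc_shift_sub_le hdiv m N))
  have hsmall := tendsto_one_div_log_natCast.zero_mul_isBoundedUnder_le
    (isBoundedUnder_of ⟨_, hbound⟩)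
  simpa [mul_sub] using h.add hsmall

end BoundedShift

lemma abs_moebius_sq_le_one (n : ℕ) : |((moebius n : ℤ) : ℝ) ^ 2| ≤ 1 := by
  rw [abs_pow, sq_le_one_iff₀ (abs_nonneg _)]
  exact_mod_cast abs_moebius_le_one

lemma e_zero : e 0 = 1 := by simp [e]

lemma e_add (x y : ℝ) : e (x + y) = e x * e y := by
  rw [e, e, e, ← Complex.exp_add]
  push_cast
  ring_nf

lemma conj_e (x : ℝ) : conj (e x) = e (-x) := by
  rw [e, e, ← Complex.exp_conj]
  simp only [map_mul, Complex.conj_I, Complex.conj_ofReal, map_ofNat]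
  push_cast
  ring_nf

lemma intCast_mul_e_mul_conj (a b : ℤ) (x y : ℝ) :
    (a * e x) * conj (b * e y) = a * b * e (x - y) := by
  rw [map_mul, map_intCast, conj_e, sub_eq_add_neg, e_add]
  ring

lemma ofReal_norm_sum_sq {ι : Type*} (s : Finset ι) (z : ι → ℂ) :
    ((‖∑ i ∈ s, z i‖ ^ 2 : ℝ) : ℂ) = ∑ i ∈ s, ∑ j ∈ s, z i * conj (z j) := by
  rw [Complex.ofReal_pow, ← Complex.mul_conj', map_sum, sum_mul_sum]

lemma tendsto_logAvg_norm_sum_sq {ι : Type*} (s : Finset ι) (A : ι → ℕ → ℂ) (c : ι → ι → ℂ)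
    (hc : ∀ i ∈ s, ∀ j ∈ s, Tendsto (fun N : ℕ => (1 / (Real.log N : ℂ)) *
      ∑ n ∈ Icc 1 N, A i n * conj (A j n) / n) atTop (𝓝 (c i j))) :
    Tendsto (fun N : ℕ => (((1 / Real.log N) * ∑ n ∈ Icc 1 N,
      (1 / (n : ℝ)) * ‖∑ i ∈ s, A i n‖ ^ 2 : ℝ) : ℂ)) atTop (𝓝 (∑ i ∈ s, ∑ j ∈ s, c i j)) := by
  refine (tendsto_finsetSum _ fun i hi => tendsto_finsetSum _ fun j hj => hc i hi j hj).congr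
    fun N => ?_
  simp only [Complex.ofReal_mul, Complex.ofReal_sum, ofReal_norm_sum_sq, mul_sum]
  symm
  rw [sum_comm]
  refine sum_congr rfl fun i _ => ?_
  rw [sum_comm]
  refine sum_congr rfl fun j _ => sum_congr rfl fun n _ => ?_
  push_cast
  ring

noncomputable def moebiusTwist (P : Polynomial ℝ) (m : ℕ) : ℂ :=
  ((moebius m : ℤ) : ℂ) * e (P.eval (m : ℝ))

lemma tendsto_logAvg_moebiusTwist_mul_conj_self {L : ℝ} (hii : LogMeanMoebiusSq L)
    (P : Polynomial ℝ) (k : ℕ) :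
    Tendsto (fun N : ℕ => (1 / (Real.log N : ℂ)) * ∑ n ∈ Icc 1 N,
      moebiusTwist P (n + k) * conj (moebiusTwist P (n + k)) / n) atTop (𝓝 (L : ℂ)) := by
  refine (tendsto_logAvg_shift abs_moebius_sq_le_one k hii).ofReal.congr fun N => ?_
  simp only [moebiusTwist, intCast_mul_e_mul_conj, sub_self, e_zero]
  push_cast
  simp only [sq, mul_one]

lemma tendsto_logAvg_moebiusTwist_mul_conj_of_ne (hi : LogChowlaWithPolynomialPhases)
    (P : Polynomial ℝ) {k₁ k₂ : ℕ} (hk : k₁ ≠ k₂) :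
    Tendsto (fun N : ℕ => (1 / (Real.log N : ℂ)) * ∑ n ∈ Icc 1 N,
      moebiusTwist P (n + k₁) * conj (moebiusTwist P (n + k₂)) / n) atTop (𝓝 0) := by
  open Polynomial in
  refine (hi k₁ k₂ hk (P.comp (X + C (k₁ : ℝ)) - P.comp (X + C (k₂ : ℝ)))).congr fun N => ?_
  simp only [moebiusTwist, intCast_mul_e_mul_conj, eval_sub, eval_comp, eval_add, eval_X, eval_C,
    Nat.cast_add]

theorem tendsto_logAvg_norm_sq_avg_moebiusTwist (hi : LogChowlaWithPolynomialPhases)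
    {L : ℝ} (hii : LogMeanMoebiusSq L) (P : Polynomial ℝ) {s : ℕ} (hs : 1 ≤ s) (h : ℕ) :
    Tendsto (fun N : ℕ => (1 / Real.log N) * ∑ n ∈ Icc 1 N, (1 / (n : ℝ)) *
      ‖(1 / (h : ℂ)) * ∑ l ∈ Icc 1 h, moebiusTwist P (n + l * s)‖ ^ 2) atTop (𝓝 (L / h)) := by
  have hsum := tendsto_logAvg_norm_sum_sq (Icc 1 h) (fun l n => moebiusTwist P (n + l * s))
    (fun l₁ l₂ => if l₁ = l₂ then (L : ℂ) else 0) fun l₁ _ l₂ _ => by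
      split_ifs with hl
      · subst hl
        exact tendsto_logAvg_moebiusTwist_mul_conj_self hii P _
      · exact tendsto_logAvg_moebiusTwist_mul_conj_of_ne hi P
          fun hEq => hl (Nat.eq_of_mul_eq_mul_right hs hEq)
  have hdiag : ∑ l₁ ∈ Icc 1 h, ∑ l₂ ∈ Icc 1 h,
      (if l₁ = l₂ then (L : ℂ) else 0) = ((h * L : ℝ) : ℂ) := by
    rw [sum_congr rfl fun l hl => by rw [sum_ite_eq, if_pos hl]]
    simp
  rw [hdiag, tendsto_ofReal_iff] at hsum
  convert hsum.const_mul ((1 / h : ℝ) ^ 2) using 1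
  · ext N
    simp only [norm_mul, mul_pow, norm_div, norm_one, Complex.norm_natCast]
    simp only [mul_sum]
    refine sum_congr rfl fun n _ => ?_
    ring
  · grind

lemma tendsto_logAvg_one :
    Tendsto (fun N : ℕ => (1 / Real.log N) * ∑ n ∈ Icc 1 N, (1 / (n : ℝ))) atTop (𝓝 1) := by
  have h := (tendsto_one_div_log_natCast.mul tendsto_harmonic_sub_log).add_const 1
  rw [zero_mul, zero_add] at h
  refine h.congr' ?_
  filter_upwards [eventually_gt_atTop 1] with N hN
  have hlog : Real.log N ≠ 0 := (Real.log_pos (by exact_mod_cast hN)).ne'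
  rw [harmonic_eq_sum_Icc]
  push_cast
  field_simp
  ring

lemma logAvg_le_sqrt_mul (f : ℕ → ℝ) (N : ℕ) :
    (1 / Real.log N) * ∑ n ∈ Icc 1 N, (1 / (n : ℝ)) * f n ≤
      √(((1 / Real.log N) * ∑ n ∈ Icc 1 N, (1 / (n : ℝ))) *
        ((1 / Real.log N) * ∑ n ∈ Icc 1 N, (1 / (n : ℝ)) * f n ^ 2)) := by
  apply Real.le_sqrt_of_sq_le
  have hcs := sum_sq_le_sum_mul_sum_of_sq_le_mul (Icc 1 N) (r := fun n => 1 / (n : ℝ) * f n)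
    (f := fun n => 1 / (n : ℝ)) (g := fun n => 1 / (n : ℝ) * f n ^ 2)
    (fun n _ => by positivity) (fun n _ => by positivity) (fun n _ => le_of_eq (by ring))
  calc ((1 / Real.log N) * ∑ n ∈ Icc 1 N, (1 / (n : ℝ)) * f n) ^ 2
      = (1 / Real.log N) ^ 2 * (∑ n ∈ Icc 1 N, (1 / (n : ℝ)) * f n) ^ 2 := mul_pow _ _ _
    _ ≤ (1 / Real.log N) ^ 2 * ((∑ n ∈ Icc 1 N, 1 / (n : ℝ)) *
          ∑ n ∈ Icc 1 N, (1 / (n : ℝ)) * f n ^ 2) := by gcongr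
    _ = _ := by ring

lemma limsup_logAvg_le_sqrt {f : ℕ → ℝ} (hf : ∀ n, 0 ≤ f n) {L : ℝ}
    (hL : Tendsto (fun N : ℕ => (1 / Real.log N) * ∑ n ∈ Icc 1 N, (1 / (n : ℝ)) * f n ^ 2)
      atTop (𝓝 L)) :
    limsup (fun N : ℕ => (1 / Real.log N) * ∑ n ∈ Icc 1 N, (1 / (n : ℝ)) * f n) atTop ≤ √L := by
  have hbound := (tendsto_logAvg_one.mul hL).sqrt
  rw [one_mul] at hbound
  rw [← hbound.limsup_eq]
  refine limsup_le_limsup (.of_forall fun N => logAvg_le_sqrt_mul f N)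
    (isCoboundedUnder_le_of_le atTop (x := 0) fun N => ?_) hbound.isBoundedUnder_le
  exact mul_nonneg (one_div_nonneg.mpr (Real.log_natCast_nonneg N))
    (sum_nonneg fun n _ => mul_nonneg (by positivity) (hf n))

/-- Assuming logarithmically averaged two-point Chowla twisted by polynomial phases (i)
and the logarithmic mean square of μ (ii), the logarithmic mean square of
`(1/h)∑_l μ(n+ls)e(P(n+ls))` equals `6/(π²h)`, and by Cauchy–Schwarz the first moment
is at most `√(6/π²)·h^{-1/2}`, independently of `s`. -/
theorem stmt_11
    (hi : ∀ h₁ h₂ : ℕ, h₁ ≠ h₂ → ∀ Q : Polynomial ℝ,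
      Tendsto (fun N : ℕ => (1 / (Real.log N : ℂ)) * ∑ n ∈ Icc 1 N,
          ((moebius (n + h₁) : ℤ) : ℂ) * ((moebius (n + h₂) : ℤ) : ℂ) *
            e (Q.eval (n : ℝ)) / (n : ℂ))
        atTop (nhds 0))
    (hii : Tendsto (fun N : ℕ => (1 / Real.log N) * ∑ n ∈ Icc 1 N,
        ((moebius n : ℤ) : ℝ) ^ 2 / (n : ℝ)) atTop (nhds (6 / π ^ 2))) :
    ∀ (P : Polynomial ℝ) (s h : ℕ), 1 ≤ s → 1 ≤ h →
      Tendsto (fun N : ℕ => (1 / Real.log N) * ∑ n ∈ Icc 1 N, (1 / (n : ℝ)) *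
          ‖(1 / (h : ℂ)) * ∑ l ∈ Icc 1 h,
              ((moebius (n + l * s) : ℤ) : ℂ) * e (P.eval ((n + l * s : ℕ) : ℝ))‖ ^ 2)
        atTop (nhds (6 / (π ^ 2 * (h : ℝ)))) ∧
      limsup (fun N : ℕ => (1 / Real.log N) * ∑ n ∈ Icc 1 N, (1 / (n : ℝ)) *
          ‖(1 / (h : ℂ)) * ∑ l ∈ Icc 1 h,
              ((moebius (n + l * s) : ℤ) : ℂ) * e (P.eval ((n + l * s : ℕ) : ℝ))‖) atTop
        ≤ Real.sqrt (6 / π ^ 2) * (h : ℝ) ^ (-(1 / 2 : ℝ)) := by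
  intro P s h hs _
  have hsq := tendsto_logAvg_norm_sq_avg_moebiusTwist hi hii P hs h
  refine ⟨by rwa [div_div] at hsq,
    (limsup_logAvg_le_sqrt (fun _ => norm_nonneg _) hsq).trans_eq ?_⟩
  rw [Real.sqrt_div' _ h.cast_nonneg, Real.sqrt_eq_rpow h, div_eq_mul_inv,
    Real.rpow_neg h.cast_nonneg]
end

section
/- Let P > 2, Q > P be real numbers, s ≥ 1 an integer, and let 𝒫 be the set of primes p ∈ (P, Q] with p ∤ s. For n ∈ ℕ, let ω_𝒫(n) = |{p ∈ 𝒫 : p | n}|. Then for any bounded multiplicative function β with |β| ≤ 1 and for every n, |β(n) − ∑_{p ∈ 𝒫} ∑_{l : pl = n} β(p)β(l)/(1 + ω_𝒫(l))| ≤ 1_{ω_𝒫(n) = 0} + ∑_{p ∈ 𝒫} 1_{p² | n} · 2. -/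
open Finset

/-- Ramaré-type identity: with `PP` the primes in `(P,Q]` not dividing `s` and
`ω_PP(n)` the number of primes of `PP` dividing `n`, for every `n ≥ 1`,
`|β(n) − ∑_{p∈PP, pl=n} β(p)β(l)/(1+ω_PP(l))| ≤ 1_{ω_PP(n)=0} + ∑_{p∈PP} 2·1_{p²|n}`. -/
theorem stmt_17 (P Q : ℝ) (hP : 2 < P) (hPQ : P < Q) (s : ℕ) (hs : 1 ≤ s)
    (PP : Finset ℕ)
    (hPP : ∀ p : ℕ, p ∈ PP ↔ p.Prime ∧ P < (p : ℝ) ∧ (p : ℝ) ≤ Q ∧ ¬ p ∣ s)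
    (β : ℕ → ℂ) (hβ_mul : ∀ m n : ℕ, Nat.Coprime m n → β (m * n) = β m * β n)
    (hβ_one : β 1 = 1) (hβ_bd : ∀ n, ‖β n‖ ≤ 1) :
    ∀ n : ℕ, 1 ≤ n →
      ‖β n - ∑ p ∈ PP, (if p ∣ n then
            β p * β (n / p) /
              (((1 + (PP.filter (fun q => q ∣ n / p)).card : ℕ) : ℂ))
          else 0)‖
        ≤ (if (PP.filter (fun p => p ∣ n)).card = 0 then (1 : ℝ) else 0)
          + ∑ p ∈ PP, (if p ^ 2 ∣ n then (2 : ℝ) else 0) := by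
  intro n hn
  have hnonneg : (0:ℝ) ≤ ∑ p ∈ PP, (if p ^ 2 ∣ n then (2 : ℝ) else 0) := by
    apply Finset.sum_nonneg; intro p _; positivity
  set f : ℕ → ℂ := fun p => β p * β (n / p) /
      (((1 + (PP.filter (fun q => q ∣ n / p)).card : ℕ) : ℂ)) with hf
  set A := PP.filter (fun p => p ∣ n) with hAdef
  rw [← Finset.sum_filter]
  by_cases hω : A.card = 0
  · have hAe : A = ∅ := Finset.card_eq_zero.mp hω
    rw [← hAdef, hAe]
    simp only [Finset.sum_empty, sub_zero]
    rw [if_pos Finset.card_empty]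
    have := hβ_bd n
    linarith
  · rw [← hAdef, if_neg hω, zero_add]
    show ‖β n - ∑ p ∈ A, f p‖ ≤ ∑ p ∈ PP, (if p ^ 2 ∣ n then (2 : ℝ) else 0)
    have hA1 : 1 ≤ A.card := Nat.one_le_iff_ne_zero.mpr hω
    set B := A.filter (fun p => p ^ 2 ∣ n) with hBdef
    set C := A.filter (fun p => ¬ p ^ 2 ∣ n) with hCdef
    have hsplit : ∑ p ∈ A, f p = ∑ p ∈ B, f p + ∑ p ∈ C, f p :=
      (Finset.sum_filter_add_sum_filter_not A _ f).symm
    have hcardBC : B.card + C.card = A.card :=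
      Finset.card_filter_add_card_filter_not _
    -- each term over C equals β n / A.card
    have hC : ∀ p ∈ C, f p = β n / (A.card : ℂ) := by
      intro p hpC
      obtain ⟨hpA, hp2⟩ := Finset.mem_filter.mp hpC
      obtain ⟨hpPP, hpn⟩ := Finset.mem_filter.mp hpA
      have hp : p.Prime := ((hPP p).mp hpPP).1
      have hpnp : ¬ p ∣ n / p := by
        intro h
        exact hp2 (by rw [sq]; exact (Nat.dvd_div_iff_mul_dvd hpn).mp h)
      have hcop : Nat.Coprime p (n / p) := (Nat.Prime.coprime_iff_not_dvd hp).mpr hpnp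
      have hβn : β n = β p * β (n / p) := by
        conv_lhs => rw [← Nat.mul_div_cancel' hpn]
        exact hβ_mul _ _ hcop
      have hfilt : PP.filter (fun q => q ∣ n / p) = A.erase p := by
        ext q
        simp only [Finset.mem_filter, Finset.mem_erase, hAdef]
        constructor
        · rintro ⟨hqPP, hq⟩
          refine ⟨?_, hqPP, hq.trans (Nat.div_dvd_of_dvd hpn)⟩
          rintro rfl; exact hpnp hq
        · rintro ⟨hne, hqPP, hqn⟩
          refine ⟨hqPP, ?_⟩
          have hq : q.Prime := ((hPP q).mp hqPP).1
          have hqp : Nat.Coprime q p := (Nat.coprime_primes hq hp).mpr hne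
          have hd : q ∣ p * (n / p) := by rwa [Nat.mul_div_cancel' hpn]
          exact hqp.dvd_of_dvd_mul_left hd
      have hcardA : 1 + (PP.filter (fun q => q ∣ n / p)).card = A.card := by
        rw [hfilt, Finset.card_erase_of_mem hpA]
        omega
      simp only [hf]
      rw [hcardA, ← hβn]
    have hsumC : ∑ p ∈ C, f p = (C.card : ℂ) * (β n / (A.card : ℂ)) := by
      rw [Finset.sum_congr rfl hC, Finset.sum_const, nsmul_eq_mul]
    -- norm of the B-part
    have hfbd : ∀ p ∈ B, ‖f p‖ ≤ 1 := by
      intro p _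
      simp only [hf, norm_div, norm_mul, Complex.norm_natCast]
      have h1 := hβ_bd p
      have h2 := hβ_bd (n / p)
      have h3 : (1:ℝ) ≤ ((1 + (PP.filter (fun q => q ∣ n / p)).card : ℕ) : ℝ) := by
        push_cast; linarith [Nat.cast_nonneg (α := ℝ) (PP.filter (fun q => q ∣ n / p)).card]
      rw [div_le_one (by linarith)]
      nlinarith [norm_nonneg (β p), norm_nonneg (β (n / p))]
    have hBsum : ‖∑ p ∈ B, f p‖ ≤ (B.card : ℝ) := by
      calc ‖∑ p ∈ B, f p‖ ≤ ∑ p ∈ B, ‖f p‖ := norm_sum_le _ _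
        _ ≤ ∑ p ∈ B, (1:ℝ) := Finset.sum_le_sum hfbd
        _ = (B.card : ℝ) := by simp
    -- the main part
    have hωC : (A.card : ℂ) ≠ 0 := by
      exact_mod_cast Nat.cast_ne_zero.mpr hω
    have hmain : β n - (C.card : ℂ) * (β n / (A.card : ℂ))
        = (B.card : ℂ) * β n / (A.card : ℂ) := by
      have hcast : (B.card : ℂ) + (C.card : ℂ) = (A.card : ℂ) := by
        exact_mod_cast hcardBC
      field_simp
      linear_combination -(β n) * hcast
    have hmainbd : ‖(B.card : ℂ) * β n / (A.card : ℂ)‖ ≤ (B.card : ℝ) := by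
      rw [norm_div, norm_mul, Complex.norm_natCast, Complex.norm_natCast]
      rw [div_le_iff₀ (by exact_mod_cast Nat.pos_of_ne_zero hω)]
      have h1 := hβ_bd n
      have h2 : (1:ℝ) ≤ (A.card : ℝ) := by exact_mod_cast hA1
      nlinarith [norm_nonneg (β n), Nat.cast_nonneg (α := ℝ) B.card]
    -- RHS equals 2 * B.card
    have hRHS : ∑ p ∈ PP, (if p ^ 2 ∣ n then (2 : ℝ) else 0) = 2 * (B.card : ℝ) := by
      rw [← Finset.sum_filter]
      have : PP.filter (fun p => p ^ 2 ∣ n) = B := by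
        rw [hBdef, hAdef, Finset.filter_filter]
        apply Finset.filter_congr
        intro p _
        constructor
        · intro h; exact ⟨(dvd_pow_self p two_ne_zero).trans h, h⟩
        · exact fun h => h.2
      rw [this, Finset.sum_const, nsmul_eq_mul]
      ring
    have key : β n - ∑ p ∈ A, f p
        = (β n - (C.card : ℂ) * (β n / (A.card : ℂ))) - ∑ p ∈ B, f p := by
      rw [hsplit, hsumC]; ring
    rw [hRHS, key]
    refine le_trans (norm_sub_le _ _) ?_
    rw [hmain]
    have h := add_le_add hmainbd hBsum
    linarith
end
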